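/- arXiv:0712.0104 — 2 statements merged into one kernel-verified Lean document; each statement's English description precedes it below -/
import Mathlib

section
/- The group U presented by generators {t^U : t ∈ T} with relations (t^U)^2 = 1 and t^U s^U (t^U)^{-1} = (t.s)^U for all s,t ∈ T, equipped with the action induced by the morphism to the terminal reflection group, is the initial T-reflection group: for every T-reflection group X there is a unique reflection morphism U → X. -/
/-- A symmetric system: a set with a multiplication satisfying (S1) and (S2). -/
structure SymmetricSystem (T : Type*) where
  mul : T → T → T
  s1 : ∀ s t : T, mul s (mul s t) = t
  s2 : ∀ r s t : T, mul r (mul s t) = mul (mul r s) (mul r t)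

/-- A `T`-reflection group: a group `X` acting on `T` together with a map `t ↦ t^X`
satisfying axioms (G1)-(G4). -/
structure ReflectionGroup {T : Type*} (S : SymmetricSystem T) (X : Type*) [Group X] where
  act : X → T → T
  act_one : ∀ t : T, act 1 t = t
  act_mul : ∀ x y : X, ∀ t : T, act (x * y) t = act x (act y t)
  refl : T → X
  g1 : Subgroup.closure (Set.range refl) = ⊤
  g2 : ∀ s t : T, act (refl t) s = S.mul t s
  g3 : ∀ s t : T, refl t * refl s * (refl t)⁻¹ = refl (S.mul t s)
  g4 : ∀ t : T, refl t * refl t = 1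


/-- The relations of the presentation by conjugation. -/
def conjRels {T : Type*} (S : SymmetricSystem T) : Set (FreeGroup T) :=
  {w | (∃ t : T, w = FreeGroup.of t * FreeGroup.of t) ∨
       (∃ s t : T, w = FreeGroup.of t * FreeGroup.of s * (FreeGroup.of t)⁻¹ *
          (FreeGroup.of (S.mul t s))⁻¹)}

/-!
The generators `t^U` satisfy (G3) and (G4) by the very relations of the presentation, and
(G1) holds because they generate. For (G2), the permutations `s ↦ t.s` of `T` satisfy the
relations as well — (S1) makes them involutions and (S2) says that conjugating `s ↦ s'.s` by
`s ↦ t.s` gives `s ↦ (t.s').s` — so `t^U ↦ (s ↦ t.s)` extends to a morphism `U → Sym(T)`,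
through which `U` acts on `T`. Finally, in every `T`-reflection group `X` the elements `t^X`
satisfy the relations by (G3) and (G4), so the universal property of the presentation gives
exactly one morphism `U → X` with `t^U ↦ t^X`.
-/

namespace SymmetricSystem

variable {T : Type*} (S : SymmetricSystem T)

def perm_s4 (t : T) : Equiv.Perm T :=
  ⟨S.mul t, S.mul t, S.s1 t, S.s1 t⟩

theorem perm_mul_self (t : T) : S.perm_s4 t * S.perm_s4 t = 1 :=
  Equiv.ext (S.s1 t)

theorem perm_conj (s t : T) :
    S.perm_s4 t * S.perm_s4 s * (S.perm_s4 t)⁻¹ = S.perm_s4 (S.mul t s) := by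
  ext r
  change S.mul t (S.mul s (S.mul t r)) = S.mul (S.mul t s) r
  rw [S.s2, S.s1]

end SymmetricSystem

section Presentation

variable {T : Type*} (S : SymmetricSystem T)

theorem lift_eq_one_of_mem_conjRels {X : Type*} [Group X] {f : T → X}
    (hsq : ∀ t : T, f t * f t = 1)
    (hconj : ∀ s t : T, f t * f s * (f t)⁻¹ = f (S.mul t s)) :
    ∀ r ∈ conjRels S, FreeGroup.lift f r = 1 := by
  rintro r (⟨t, rfl⟩ | ⟨s, t, rfl⟩) <;> simp [hsq, hconj]

theorem PresentedGroup.of_mul_self_conjRels (t : T) :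
    (PresentedGroup.of t : PresentedGroup (conjRels S)) * PresentedGroup.of t = 1 :=
  PresentedGroup.one_of_mem (Or.inl ⟨t, rfl⟩)

theorem PresentedGroup.of_conj_conjRels (s t : T) :
    (PresentedGroup.of t : PresentedGroup (conjRels S)) * PresentedGroup.of s *
      (PresentedGroup.of t)⁻¹ = PresentedGroup.of (S.mul t s) :=
  mul_inv_eq_one.mp (PresentedGroup.one_of_mem (Or.inr ⟨s, t, rfl⟩))

def presentedToPerm : PresentedGroup (conjRels S) →* Equiv.Perm T :=
  PresentedGroup.toGroup (lift_eq_one_of_mem_conjRels S S.perm_mul_self S.perm_conj)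

def presentedReflectionGroup : ReflectionGroup S (PresentedGroup (conjRels S)) where
  act x := presentedToPerm S x
  act_one _ := rfl
  act_mul x y _ := by simp
  refl := PresentedGroup.of
  g1 := PresentedGroup.closure_range_of _
  g2 s t := by simp [presentedToPerm, PresentedGroup.toGroup.of, SymmetricSystem.perm_s4]
  g3 := PresentedGroup.of_conj_conjRels S
  g4 := PresentedGroup.of_mul_self_conjRels S

def ReflectionGroup.liftPresented {X : Type*} [Group X] (RX : ReflectionGroup S X) :
    PresentedGroup (conjRels S) →* X :=
  PresentedGroup.toGroup (lift_eq_one_of_mem_conjRels S RX.g4 RX.g3)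

theorem ReflectionGroup.liftPresented_of {X : Type*} [Group X] (RX : ReflectionGroup S X)
    (t : T) : RX.liftPresented S (PresentedGroup.of t) = RX.refl t :=
  PresentedGroup.toGroup.of _

end Presentation

/-- The group presented by generators `t^U (t ∈ T)` and relations `(t^U)² = 1`,
`t^U s^U (t^U)⁻¹ = (t.s)^U` is the initial `T`-reflection group: it carries a
reflection-group structure with `refl t = of t`, and for every `T`-reflection group `X`
there is a unique reflection morphism from it to `X`. -/
theorem presentedGroup_initial_reflectionGroup
    {T : Type*} (S : SymmetricSystem T) :
    ∃ R : ReflectionGroup S (PresentedGroup (conjRels S)),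
      (∀ t : T, R.refl t = PresentedGroup.of t) ∧
      (∀ (X : Type*) [Group X] (RX : ReflectionGroup S X),
        ∃! φ : PresentedGroup (conjRels S) →* X, ∀ t : T, φ (R.refl t) = RX.refl t) := by
  refine ⟨presentedReflectionGroup S, fun _ => rfl, fun X _ RX => ?_⟩
  refine ⟨RX.liftPresented S, RX.liftPresented_of S, fun φ hφ => ?_⟩
  exact PresentedGroup.ext fun t => (hφ t).trans (RX.liftPresented_of S t).symm
end

section
/- If X is a T-reflection group that separates reflections, then the center of X equals the kernel of the unique reflection morphism X → 𝒯 to the terminal T-reflection group. -/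
/-- For `s ∈ T`, the map `t ↦ s.t` is a bijection of `T` (by (S1)). -/
def SymmetricSystem.perm {T : Type*} (S : SymmetricSystem T) (s : T) : Equiv.Perm T :=
  Function.Involutive.toPerm (S.mul s) (fun t => S.s1 s t)

/-- The terminal reflection group: the subgroup of the symmetric group of `T` generated by
the maps `t ↦ s.t`. -/
def SymmetricSystem.terminal {T : Type*} (S : SymmetricSystem T) : Subgroup (Equiv.Perm T) :=
  Subgroup.closure (Set.range S.perm)

/-!
Conjugation by `x` sends `t^X` to `(x.t)^X` by (G2) and (G3), and `φ` realises the action of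
`X` on `T`; both hold on the generators `t^X`, hence everywhere by (G1). So `x ∈ ker φ` iff
`x` fixes every `t`, iff (by injectivity of `t ↦ t^X`) `x` commutes with every `t^X`, iff
(by (G1) again) `x` is central.
-/

namespace ReflectionGroup

variable {T : Type*} {S : SymmetricSystem T} {X : Type*} [Group X] (RX : ReflectionGroup S X)

theorem refl_inv (t : T) : (RX.refl t)⁻¹ = RX.refl t :=
  inv_eq_of_mul_eq_one_right (RX.g4 t)

/-- Since the generators `t^X` are involutions, the inverse step of closure induction is free. -/
@[elab_as_elim]
theorem induction {p : X → Prop} (x : X) (refl : ∀ t, p (RX.refl t)) (one : p 1)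
    (mul : ∀ x y, p x → p y → p (x * y)) : p x := by
  have hx : x ∈ Subgroup.closure (Set.range RX.refl) := RX.g1 ▸ Subgroup.mem_top x
  induction hx using Subgroup.closure_induction'' with
  | mem _ h => obtain ⟨t, rfl⟩ := h; exact refl t
  | inv_mem _ h => obtain ⟨t, rfl⟩ := h; rw [RX.refl_inv]; exact refl t
  | one => exact one
  | mul x y _ _ hx hy => exact mul x y hx hy

theorem mul_refl_mul_inv (x : X) (s : T) : x * RX.refl s * x⁻¹ = RX.refl (RX.act x s) := by
  induction x using RX.induction generalizing s with
  | refl t => rw [RX.g3, RX.g2]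
  | one => rw [one_mul, inv_one, mul_one, RX.act_one]
  | mul x y hx hy =>
    calc x * y * RX.refl s * (x * y)⁻¹ = x * (y * RX.refl s * y⁻¹) * x⁻¹ := by group
      _ = RX.refl (RX.act (x * y) s) := by rw [hy, hx, RX.act_mul]

theorem commute_refl_iff (hsep : Function.Injective RX.refl) {x : X} {t : T} :
    Commute x (RX.refl t) ↔ RX.act x t = t := by
  rw [← hsep.eq_iff, ← mul_refl_mul_inv, mul_inv_eq_iff_eq_mul]
  rfl

theorem mem_center_iff {x : X} : x ∈ Subgroup.center X ↔ ∀ t, Commute x (RX.refl t) := by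
  refine ⟨fun hx t => (Subgroup.mem_center_iff.mp hx (RX.refl t)).symm, fun h => ?_⟩
  refine Subgroup.mem_center_iff.mpr fun g => ?_
  induction g using RX.induction with
  | refl t => exact (h t).symm
  | one => exact Commute.one_left x
  | mul g g' hg hg' => exact Commute.mul_left hg hg'

theorem coe_map_apply {φ : X →* S.terminal}
    (hφ : ∀ t : T, (φ (RX.refl t) : Equiv.Perm T) = S.perm t) (x : X) (s : T) :
    (φ x : Equiv.Perm T) s = RX.act x s := by
  induction x using RX.induction generalizing s with
  | refl t => rw [hφ, RX.g2]; rfl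
  | one => rw [map_one, OneMemClass.coe_one, Equiv.Perm.one_apply, RX.act_one]
  | mul x y hx hy => rw [map_mul, Subgroup.coe_mul, Equiv.Perm.mul_apply, hy, hx, RX.act_mul]

theorem mem_ker_iff {φ : X →* S.terminal}
    (hφ : ∀ t : T, (φ (RX.refl t) : Equiv.Perm T) = S.perm t) {x : X} :
    x ∈ φ.ker ↔ ∀ t, RX.act x t = t := by
  rw [MonoidHom.mem_ker, ← OneMemClass.coe_eq_one, Equiv.Perm.ext_iff]
  simp only [RX.coe_map_apply hφ, Equiv.Perm.one_apply]

end ReflectionGroup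

/-- If `X` is a `T`-reflection group that separates reflections, then its center is the
kernel of the reflection morphism to the terminal reflection group. -/
theorem center_eq_ker_toTerminal
    {T : Type*} (S : SymmetricSystem T) {X : Type*} [Group X]
    (RX : ReflectionGroup S X) (hsep : Function.Injective RX.refl)
    (φ : X →* S.terminal)
    (hφ : ∀ t : T, (φ (RX.refl t) : Equiv.Perm T) = S.perm t) :
    φ.ker = Subgroup.center X := by
  ext x
  rw [RX.mem_ker_iff hφ, RX.mem_center_iff]
  exact forall_congr' fun t => (RX.commute_refl_iff hsep).symm
end
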